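/- arXiv:1609.04900 — 2 statements merged into one kernel-verified Lean document; each statement's English description precedes it below -/
import Mathlib

section
/- Let S³ ⊂ ℝ⁴ be the unit 3-sphere with its canonical round metric, and let v_H be a Hopf vector field on S³ (e.g. v_H(x) = i·x under the identification of ℝ⁴ with the quaternions, i.e. v_H(x₁,x₂,x₃,x₄) = (−x₂, x₁, −x₄, x₃)). Then the energy of v_H equals E(v_H) = (5/2)·vol(S³). -/
open MeasureTheory Metric

noncomputable section

set_option maxHeartbeats 1000000

/-- The Hopf vector field on `ℝ⁴ ≅ ℍ`, `v_H(x₁,x₂,x₃,x₄) = (−x₂, x₁, −x₄, x₃)`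
(left multiplication by the imaginary quaternion `i`); restricted to the unit sphere `S³`
it is a unit tangent vector field. -/
def hopfField (x : EuclideanSpace ℝ (Fin 4)) : EuclideanSpace ℝ (Fin 4) :=
  (WithLp.equiv 2 (Fin 4 → ℝ)).symm ![-x 1, x 0, -x 3, x 2]

/-- Orthogonal projection of the ambient vector `w` onto the tangent space of the unit
sphere at the point `x`, namely `w - ⟪w, x⟫ x`. -/
def tangentialProj (x w : EuclideanSpace ℝ (Fin 4)) : EuclideanSpace ℝ (Fin 4) :=
  w - (inner ℝ w x : ℝ) • x

/-- Pointwise computation: using the quaternionic orthonormal tangent frame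
`(ix, jx, kx)` at `x ∈ S³`, the squared Hilbert–Schmidt norm of `∇v_H` equals `2`. -/
lemma hopf_hs_norm_eq_two (bd : EuclideanSpace ℝ (Fin 4) → ℝ)
    (hbd : ∀ x ∈ sphere (0 : EuclideanSpace ℝ (Fin 4)) 1,
      ∀ e : Fin 3 → EuclideanSpace ℝ (Fin 4), Orthonormal ℝ e →
        (∀ i, (inner ℝ (e i) x : ℝ) = 0) →
        bd x = ∑ i, ‖tangentialProj x (hopfField (e i))‖ ^ 2)
    (x : EuclideanSpace ℝ (Fin 4)) (hx : x ∈ sphere (0 : EuclideanSpace ℝ (Fin 4)) 1) :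
    bd x = 2 := by
  have hx1 : (inner ℝ x x : ℝ) = 1 := by
    rw [real_inner_self_eq_norm_sq]
    simp [mem_sphere_zero_iff_norm.mp hx]
  have hsum : x 0 ^ 2 + x 1 ^ 2 + x 2 ^ 2 + x 3 ^ 2 = 1 := by
    rw [PiLp.inner_apply] at hx1
    simpa [Fin.sum_univ_four, sq] using hx1
  set e : Fin 3 → EuclideanSpace ℝ (Fin 4) :=
    ![(WithLp.equiv 2 (Fin 4 → ℝ)).symm ![-x 1, x 0, -x 3, x 2],
      (WithLp.equiv 2 (Fin 4 → ℝ)).symm ![-x 2, x 3, x 0, -x 1],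
      (WithLp.equiv 2 (Fin 4 → ℝ)).symm ![-x 3, -x 2, x 1, x 0]] with he
  have horth : Orthonormal ℝ e := by
    rw [orthonormal_iff_ite]
    intro i j
    fin_cases i <;> fin_cases j <;>
      simp [he, PiLp.inner_apply, Fin.sum_univ_four, WithLp.equiv_symm_apply, PiLp.toLp_apply,
        -inner_self_eq_norm_sq_to_K] <;>
      nlinarith [hsum]
  have htang : ∀ i, (inner ℝ (e i) x : ℝ) = 0 := by
    intro i
    fin_cases i <;>
      simp [he, PiLp.inner_apply, Fin.sum_univ_four, WithLp.equiv_symm_apply, PiLp.toLp_apply] <;> ring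
  rw [hbd x hx e horth htang]
  have hn : ∀ w : EuclideanSpace ℝ (Fin 4), ‖w‖ ^ 2 = (inner ℝ w w : ℝ) :=
    fun w => (real_inner_self_eq_norm_sq w).symm
  simp only [Fin.sum_univ_three, hn]
  simp [he, tangentialProj, hopfField, PiLp.inner_apply, Fin.sum_univ_four,
    WithLp.equiv_symm_apply, PiLp.toLp_apply, PiLp.sub_apply, PiLp.smul_apply, smul_eq_mul,
    -inner_self_eq_norm_sq_to_K]
  linear_combination ((x 0^2+x 1^2+x 2^2+x 3^2)^2 - (x 0^2+x 1^2+x 2^2+x 3^2) + 2) * hsum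

/-- **Statement.** Let `S³ ⊂ ℝ⁴` be the unit sphere with the round metric, with Riemannian
volume measure the 3-dimensional Hausdorff measure `μH[3]`, and let `v_H` be the Hopf
vector field.  The covariant derivative of `v_H` in a tangent direction `b` at `x ∈ S³` is
the tangential projection of the ambient directional derivative, i.e.
`tangentialProj x (hopfField b)` (the Hopf field being linear), so the squared
Hilbert–Schmidt norm `‖∇v_H‖²` at `x` is `∑ i ‖∇_{e i} v_H‖²` over any orthonormal tangent
frame `e` at `x`.  Then the energy
`E(v_H) = (1/2) ∫_{S³} ‖∇v_H‖² + (3/2)·vol(S³)` equals `(5/2)·vol(S³)`. -/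
theorem energy_hopf_field_eq
    (bd : EuclideanSpace ℝ (Fin 4) → ℝ)
    (hbd : ∀ x ∈ sphere (0 : EuclideanSpace ℝ (Fin 4)) 1,
      ∀ e : Fin 3 → EuclideanSpace ℝ (Fin 4), Orthonormal ℝ e →
        (∀ i, (inner ℝ (e i) x : ℝ) = 0) →
        bd x = ∑ i, ‖tangentialProj x (hopfField (e i))‖ ^ 2) :
    (1 / 2) * (∫ x in sphere (0 : EuclideanSpace ℝ (Fin 4)) 1, bd x ∂μH[3])
        + (3 / 2) * (μH[3] (sphere (0 : EuclideanSpace ℝ (Fin 4)) 1)).toReal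
      = (5 / 2) * (μH[3] (sphere (0 : EuclideanSpace ℝ (Fin 4)) 1)).toReal := by
  have hmeas : MeasurableSet (sphere (0 : EuclideanSpace ℝ (Fin 4)) 1) :=
    (isClosed_sphere).measurableSet
  have hint : (∫ x in sphere (0 : EuclideanSpace ℝ (Fin 4)) 1, bd x ∂μH[3])
      = ∫ x in sphere (0 : EuclideanSpace ℝ (Fin 4)) 1, (2 : ℝ) ∂μH[3] := by
    refine setIntegral_congr_fun hmeas ?_
    intro x hx
    exact hopf_hs_norm_eq_two bd hbd x hx
  rw [hint, setIntegral_const]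
  simp only [smul_eq_mul, measureReal_def]
  ring

end
end

section
/- For all real numbers a₁₁, a₁₂, a₂₁, a₂₂, v₁, v₂, h₃₁, h₃₂, h₃₃, the determinant of the 3×3 matrix with rows (a₁₁, a₁₂, v₁), (a₂₁, a₂₂, v₂), (h₃₁, h₃₂, h₃₃) satisfies det ≤ (1/2)·√(h₃₁² + h₃₂² + h₃₃²)·(a₁₁² + a₁₂² + a₂₁² + a₂₂² + v₁² + v₂²). -/
/-!
The determinant with rows `u, v, w` is the triple product `w ⬝ (u × v)`. Cauchy–Schwarz bounds it
by `‖w‖ ‖u × v‖`, Lagrange's identity `‖u × v‖² = ‖u‖² ‖v‖² - (u ⬝ v)²` gives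
`‖u × v‖ ≤ ‖u‖ ‖v‖`, and AM–GM gives `‖u‖ ‖v‖ ≤ (‖u‖² + ‖v‖²) / 2`.
-/

open Matrix

theorem dotProduct_le_sqrt_mul_sqrt {ι : Type*} [Fintype ι] (u w : ι → ℝ) :
    u ⬝ᵥ w ≤ √(u ⬝ᵥ u) * √(w ⬝ᵥ w) := by
  simpa only [dotProduct, sq] using Real.sum_mul_le_sqrt_mul_sqrt Finset.univ u w

theorem cross_dot_cross_self_le {R : Type*} [CommRing R] [LinearOrder R] [IsStrictOrderedRing R]
    (u v : Fin 3 → R) : u ⨯₃ v ⬝ᵥ u ⨯₃ v ≤ (u ⬝ᵥ u) * (v ⬝ᵥ v) := by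
  rw [cross_dot_cross, dotProduct_comm v u]
  nlinarith [mul_self_nonneg (u ⬝ᵥ v)]

theorem sqrt_cross_dot_cross_self_le (u v : Fin 3 → ℝ) :
    √(u ⨯₃ v ⬝ᵥ u ⨯₃ v) ≤ (u ⬝ᵥ u + v ⬝ᵥ v) / 2 := by
  have hu : 0 ≤ u ⬝ᵥ u := dotProduct_self_star_nonneg u
  have hv : 0 ≤ v ⬝ᵥ v := dotProduct_self_star_nonneg v
  rw [Real.sqrt_le_iff]
  refine ⟨by positivity, (cross_dot_cross_self_le u v).trans ?_⟩
  nlinarith [sq_nonneg (u ⬝ᵥ u - v ⬝ᵥ v)]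

theorem det_vec3_le_sqrt_mul_half_add (u v w : Fin 3 → ℝ) :
    det ![u, v, w] ≤ √(w ⬝ᵥ w) * ((u ⬝ᵥ u + v ⬝ᵥ v) / 2) := by
  rw [← triple_product_eq_det, triple_product_permutation, triple_product_permutation]
  calc w ⬝ᵥ u ⨯₃ v ≤ √(w ⬝ᵥ w) * √(u ⨯₃ v ⬝ᵥ u ⨯₃ v) := dotProduct_le_sqrt_mul_sqrt _ _
    _ ≤ √(w ⬝ᵥ w) * ((u ⬝ᵥ u + v ⬝ᵥ v) / 2) := by
      gcongr
      exact sqrt_cross_dot_cross_self_le u v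

/-- For all real numbers `a₁₁, a₁₂, a₂₁, a₂₂, v₁, v₂, h₃₁, h₃₂, h₃₃`, the determinant of the
3×3 matrix with rows `(a₁₁, a₁₂, v₁)`, `(a₂₁, a₂₂, v₂)`, `(h₃₁, h₃₂, h₃₃)` satisfies
`det ≤ (1/2)·√(h₃₁² + h₃₂² + h₃₃²)·(a₁₁² + a₁₂² + a₂₁² + a₂₂² + v₁² + v₂²)`. -/
theorem det_le_norm_mul_sum_sq (a₁₁ a₁₂ a₂₁ a₂₂ v₁ v₂ h₃₁ h₃₂ h₃₃ : ℝ) :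
    (Matrix.det !![a₁₁, a₁₂, v₁; a₂₁, a₂₂, v₂; h₃₁, h₃₂, h₃₃]) ≤
      (1 / 2) * Real.sqrt (h₃₁ ^ 2 + h₃₂ ^ 2 + h₃₃ ^ 2)
        * (a₁₁ ^ 2 + a₁₂ ^ 2 + a₂₁ ^ 2 + a₂₂ ^ 2 + v₁ ^ 2 + v₂ ^ 2) := by
  convert det_vec3_le_sqrt_mul_half_add ![a₁₁, a₁₂, v₁] ![a₂₁, a₂₂, v₂] ![h₃₁, h₃₂, h₃₃] using 1
  · rfl
  · simp only [vec3_dotProduct, cons_val, ← sq]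
    ring
end
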